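/- arXiv:math/0303202 — 2 statements merged into one kernel-verified Lean document; each statement's English description precedes it below -/
import Mathlib

section
/- Let g(x,u) = χ_Λ(x)f(u) + (1−χ_Λ(x))f̃(u) for u ≥ 0 and g(x,u) = 0 for u < 0, where f̃(u) = f(u) for 0 ≤ u ≤ ℓ, f̃(u) = (α/k)u for u > ℓ, f̃(u) = 0 for u < 0, with ℓ the unique value satisfying f(ℓ)/ℓ = α/k and k > θ/(θ−2). Then: (i) g(x,u) = o(u) as u→0⁺ uniformly in x; (ii) 0 < θG(x,u) ≤ g(x,u)u for all x ∈ Λ, u > 0; (iii) 0 ≤ 2G(x,u) ≤ g(x,u)u ≤ (1/k)V(x)u² for all x ∉ Λ and u > 0, where G(x,u) = ∫₀^u g(x,τ)dτ. -/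
open MeasureTheory Filter Set Matrix Classical

/-- Classical gradient of a function on `ℝ^N` (coordinates). -/
noncomputable def pgrad (N : ℕ) (u : (Fin N → ℝ) → ℝ) (x : Fin N → ℝ) : Fin N → ℝ :=
  fun i => fderiv ℝ u x (Pi.single i 1)

/-- Primitive `F(u) = ∫₀ᵘ f`. -/
noncomputable def primF (f : ℝ → ℝ) (u : ℝ) : ℝ := ∫ t in (0:ℝ)..u, f t

/-- The energy functional `I(u) = ½∫⟨J∇u,∇u⟩ + ½V₀∫u² − ∫F(u)` on `ℝ^N`. -/
noncomputable def energy (N : ℕ) (J : Matrix (Fin N) (Fin N) ℝ) (V₀ : ℝ) (f : ℝ → ℝ)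
    (u : (Fin N → ℝ) → ℝ) : ℝ :=
  (1/2) * (∫ x, (J.mulVec (pgrad N u x)) ⬝ᵥ pgrad N u x)
    + (1/2) * V₀ * (∫ x, (u x)^2) - ∫ x, primF f (u x)

/-- `DI(u)[u] = ∫⟨J∇u,∇u⟩ + V₀∫u² − ∫f(u)u`. -/
noncomputable def derivQuad (N : ℕ) (J : Matrix (Fin N) (Fin N) ℝ) (V₀ : ℝ) (f : ℝ → ℝ)
    (u : (Fin N → ℝ) → ℝ) : ℝ :=
  (∫ x, (J.mulVec (pgrad N u x)) ⬝ᵥ pgrad N u x) + V₀ * (∫ x, (u x)^2)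
    - ∫ x, f (u x) * u x

/-- Membership in `H¹(ℝ^N)`: `u` and `|∇u|` are in `L²`. -/
def H1mem (N : ℕ) (u : (Fin N → ℝ) → ℝ) : Prop :=
  MemLp u 2 volume ∧ MemLp (fun x => Real.sqrt (pgrad N u x ⬝ᵥ pgrad N u x)) 2 volume

/-- The Nehari manifold `𝒩 = {u ∈ H¹ : u ≠ 0, DI(u)[u] = 0}`. -/
noncomputable def nehari (N : ℕ) (J : Matrix (Fin N) (Fin N) ℝ) (V₀ : ℝ) (f : ℝ → ℝ) :
    Set ((Fin N → ℝ) → ℝ) :=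
  {u | H1mem N u ∧ u ≠ 0 ∧ derivQuad N J V₀ f u = 0}

/-- The truncated nonlinearity `f̃`. -/
noncomputable def ftil (f : ℝ → ℝ) (α k ℓ : ℝ) (u : ℝ) : ℝ :=
  if u < 0 then 0 else if u ≤ ℓ then f u else (α / k) * u

/-- The del Pino–Felmer penalized nonlinearity `g(x,u) = χ_Λ f + (1−χ_Λ) f̃`. -/
noncomputable def gpen (N : ℕ) (f : ℝ → ℝ) (α k ℓ : ℝ) (Λ : Set (Fin N → ℝ))
    (x : Fin N → ℝ) (u : ℝ) : ℝ :=
  if u < 0 then 0 else if x ∈ Λ then f u else ftil f α k ℓ u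

/-- `G(x,u) = ∫₀ᵘ g(x,·)`. -/
noncomputable def Gpen (N : ℕ) (f : ℝ → ℝ) (α k ℓ : ℝ) (Λ : Set (Fin N → ℝ))
    (x : Fin N → ℝ) (u : ℝ) : ℝ :=
  ∫ t in (0:ℝ)..u, gpen N f α k ℓ Λ x t

set_option maxHeartbeats 1600000 in
/-- Properties (g1), (g3-i), (g3-ii) of the penalized nonlinearity. -/
theorem penalized_nonlinearity_properties (N : ℕ) (hN : 3 ≤ N) (f : ℝ → ℝ) (p θ : ℝ)
    (hfC : ContDiffOn ℝ 1 f (Set.Ioi 0))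
    (hp1 : 1 < p) (hp2 : p < ((N:ℝ)+2)/((N:ℝ)-2))
    (hf1 : Tendsto (fun u => f u / u) (nhdsWithin 0 (Set.Ioi 0)) (nhds 0))
    (hf2 : Tendsto (fun u => f u / u ^ p) atTop (nhds 0))
    (hθ1 : 2 < θ) (hθ2 : θ < p + 1)
    (hf3 : ∀ u : ℝ, 0 < u → 0 < θ * primF f u ∧ θ * primF f u ≤ f u * u)
    (hf4 : StrictMonoOn (fun u => f u / u) (Set.Ioi 0))
    (V : (Fin N → ℝ) → ℝ) (α : ℝ) (hα : 0 < α) (hVinf : ∀ x, α ≤ V x)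
    (Λ : Set (Fin N → ℝ)) (hΛ : IsCompact Λ)
    (k : ℝ) (hk : θ / (θ - 2) < k)
    (ℓ : ℝ) (hℓpos : 0 < ℓ) (hℓ : f ℓ / ℓ = α / k) :
    (∀ ε : ℝ, 0 < ε → ∃ δ : ℝ, 0 < δ ∧ ∀ x : Fin N → ℝ, ∀ u : ℝ, 0 < u → u < δ →
        |gpen N f α k ℓ Λ x u| ≤ ε * u) ∧
    (∀ x ∈ Λ, ∀ u : ℝ, 0 < u →
        0 < θ * Gpen N f α k ℓ Λ x u ∧
        θ * Gpen N f α k ℓ Λ x u ≤ gpen N f α k ℓ Λ x u * u) ∧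
    (∀ x : Fin N → ℝ, x ∉ Λ → ∀ u : ℝ, 0 < u →
        0 ≤ 2 * Gpen N f α k ℓ Λ x u ∧
        2 * Gpen N f α k ℓ Λ x u ≤ gpen N f α k ℓ Λ x u * u ∧
        gpen N f α k ℓ Λ x u * u ≤ (1/k) * V x * u^2) := by
  have hθ2' : (0:ℝ) < θ - 2 := by linarith
  have hk0 : 0 < k := lt_trans (div_pos (by linarith) hθ2') hk
  have hαk : 0 < α / k := div_pos hα hk0
  have hfl : f ℓ = (α / k) * ℓ := by
    have := hℓ
    field_simp at this ⊢
    linarith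
  have hfpos : ∀ u : ℝ, 0 < u → 0 < f u := by
    intro u hu
    have h3 := hf3 u hu
    have hpos : 0 < f u * u := lt_of_lt_of_le h3.1 h3.2
    by_contra hc
    push_neg at hc
    nlinarith
  -- f tends to 0 from the right at 0
  have hf0 : Tendsto f (nhdsWithin 0 (Set.Ioi 0)) (nhds 0) := by
    have h2 : Tendsto (fun u : ℝ => u) (nhdsWithin 0 (Set.Ioi 0)) (nhds 0) :=
      tendsto_id.mono_left nhdsWithin_le_nhds
    have hmul : Tendsto (fun u => (f u / u) * u) (nhdsWithin 0 (Set.Ioi 0)) (nhds 0) := by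
      simpa using hf1.mul h2
    refine hmul.congr' ?_
    filter_upwards [self_mem_nhdsWithin] with u hu
    have hu' : (u:ℝ) ≠ 0 := ne_of_gt hu
    field_simp
  -- continuous extension h1 of f by 0 on (-∞,0]
  set h1 : ℝ → ℝ := fun t => if t ≤ 0 then 0 else f t with hh1
  have hc1 : Continuous h1 := by
    rw [continuous_iff_continuousAt]
    intro t
    rcases lt_trichotomy t 0 with ht | ht | ht
    · have heq : h1 =ᶠ[nhds t] fun _ => (0:ℝ) := by
        filter_upwards [Iio_mem_nhds ht] with s hs
        simp [hh1, (mem_Iio.1 hs).le]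
      exact continuousAt_const.congr heq.symm
    · subst ht
      have h0 : h1 0 = 0 := by simp [hh1]
      unfold ContinuousAt
      rw [h0]
      have hsup : Tendsto h1 (nhdsWithin 0 (Set.Iic 0) ⊔ nhdsWithin 0 (Set.Ioi 0)) (nhds 0) := by
        rw [tendsto_sup]
        constructor
        · refine tendsto_const_nhds.congr' ?_
          filter_upwards [self_mem_nhdsWithin] with s hs
          simp [hh1, (mem_Iic.1 hs)]
        · refine hf0.congr' ?_
          filter_upwards [self_mem_nhdsWithin] with s hs
          simp [hh1, not_le.2 (mem_Ioi.1 hs)]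
      exact hsup.mono_left (le_of_eq (nhdsLE_sup_nhdsGT (0:ℝ)).symm)
    · have hmem : Set.Ioi (0:ℝ) ∈ nhds t := Ioi_mem_nhds ht
      have heq : h1 =ᶠ[nhds t] f := by
        filter_upwards [hmem] with s hs
        simp [hh1, not_le.2 (mem_Ioi.1 hs)]
      exact (hfC.continuousOn.continuousAt hmem).congr heq.symm
  -- continuous version h of ftil
  set h : ℝ → ℝ := fun t => if t ≤ ℓ then h1 t else (α / k) * t with hh
  have hch : Continuous h := by
    refine Continuous.if_le hc1 (by continuity) continuous_id continuous_const ?_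
    intro s hs
    subst hs
    simp [hh1, not_le.2 hℓpos, hfl]
  -- Gpen on Λ is primF
  have hGΛ : ∀ x ∈ Λ, ∀ u : ℝ, 0 < u → Gpen N f α k ℓ Λ x u = primF f u := by
    intro x hx u hu
    unfold Gpen primF
    apply intervalIntegral.integral_congr
    intro t ht
    rw [Set.uIcc_of_le hu.le] at ht
    simp [gpen, not_lt.2 ht.1, hx]
  -- Gpen off Λ is ∫ h
  have hae0 : ∀ᵐ t : ℝ, t ≠ (0:ℝ) := by
    rw [MeasureTheory.ae_iff]
    simp only [not_not, setOf_eq_eq_singleton]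
    exact Real.volume_singleton
  have hGout : ∀ x ∉ Λ, ∀ u : ℝ, Gpen N f α k ℓ Λ x u = ∫ t in (0:ℝ)..u, h t := by
    intro x hx u
    unfold Gpen
    apply intervalIntegral.integral_congr_ae
    filter_upwards [hae0] with t ht hti
    rcases lt_or_gt_of_ne ht with htneg | htpos
    · simp [gpen, htneg, hh, hh1, htneg.le, le_trans htneg.le hℓpos.le]
    · by_cases htl : t ≤ ℓ
      · simp [gpen, ftil, not_lt.2 htpos.le, hx, htl, hh, hh1, not_le.2 htpos]
      · simp [gpen, ftil, not_lt.2 htpos.le, hx, htl, hh]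
  -- ∫ h on [0,u] for u ≤ ℓ
  have hHle : ∀ u : ℝ, 0 < u → u ≤ ℓ → (∫ t in (0:ℝ)..u, h t) = primF f u := by
    intro u hu hul
    unfold primF
    apply intervalIntegral.integral_congr_ae
    refine MeasureTheory.ae_of_all _ ?_
    intro t ht
    rw [Set.uIoc_of_le hu.le] at ht
    have ht0 : 0 < t := ht.1
    have htl : t ≤ ℓ := le_trans ht.2 hul
    simp [hh, hh1, htl, not_le.2 ht0]
  -- ∫ h on [0,u] for u > ℓ
  have hHgt : ∀ u : ℝ, ℓ < u →
      (∫ t in (0:ℝ)..u, h t) = primF f ℓ + (α / k) * (u ^ 2 - ℓ ^ 2) / 2 := by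
    intro u hu
    have hsplit : (∫ t in (0:ℝ)..u, h t) = (∫ t in (0:ℝ)..ℓ, h t) + ∫ t in ℓ..u, h t :=
      (intervalIntegral.integral_add_adjacent_intervals (hch.intervalIntegrable _ _)
        (hch.intervalIntegrable _ _)).symm
    rw [hsplit, hHle ℓ hℓpos le_rfl]
    congr 1
    have hlin : (∫ t in ℓ..u, h t) = ∫ t in ℓ..u, (α / k) * t := by
      apply intervalIntegral.integral_congr
      intro t ht
      rw [Set.uIcc_of_le hu.le] at ht
      have ht0 : 0 < t := lt_of_lt_of_le hℓpos ht.1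
      by_cases htl : t ≤ ℓ
      · have hte : t = ℓ := le_antisymm htl ht.1
        subst hte
        simp [hh, hh1, not_le.2 ht0, hfl]
      · simp [hh, htl]
    rw [hlin, intervalIntegral.integral_const_mul, integral_id]
    ring
  refine ⟨?_, ?_, ?_⟩
  · -- (g1)
    intro ε hε
    rw [Metric.tendsto_nhdsWithin_nhds] at hf1
    obtain ⟨δ, hδ, hδ'⟩ := hf1 ε hε
    refine ⟨min δ ℓ, lt_min hδ hℓpos, ?_⟩
    intro x u hu hud
    have hul : u < ℓ := lt_of_lt_of_le hud (min_le_right _ _)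
    have hg : gpen N f α k ℓ Λ x u = f u := by
      by_cases hx : x ∈ Λ
      · simp [gpen, not_lt.2 hu.le, hx]
      · simp [gpen, ftil, not_lt.2 hu.le, hx, hul.le]
    rw [hg]
    have hdist : dist (f u / u) 0 < ε :=
      hδ' (Set.mem_Ioi.2 hu)
        (by rw [Real.dist_eq, sub_zero, abs_of_pos hu]; exact lt_of_lt_of_le hud (min_le_left _ _))
    rw [Real.dist_eq, sub_zero] at hdist
    have hfu := hfpos u hu
    rw [abs_of_pos hfu]
    have hlt : f u / u < ε := (abs_lt.1 hdist).2
    have : f u = (f u / u) * u := by field_simp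
    rw [this]
    nlinarith
  · -- (g3-i)
    intro x hx u hu
    rw [hGΛ x hx u hu]
    have hg : gpen N f α k ℓ Λ x u = f u := by simp [gpen, not_lt.2 hu.le, hx]
    rw [hg]
    exact hf3 u hu
  · -- (g3-ii)
    intro x hx u hu
    have hVx : α ≤ V x := hVinf x
    have h1k : 0 < 1 / k := by positivity
    by_cases hul : u ≤ ℓ
    · have hG : Gpen N f α k ℓ Λ x u = primF f u := by rw [hGout x hx u, hHle u hu hul]
      have hg : gpen N f α k ℓ Λ x u = f u := by
        simp [gpen, ftil, not_lt.2 hu.le, hx, hul]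
      rw [hG, hg]
      have h3 := hf3 u hu
      have hF : 0 < primF f u := by nlinarith [h3.1]
      have hineq : f u ≤ (α / k) * u := by
        rcases eq_or_lt_of_le hul with he | hlt
        · rw [he, hfl]
        · have hmono := hf4 (mem_Ioi.2 hu) (mem_Ioi.2 hℓpos) hlt
          simp only at hmono
          rw [hℓ] at hmono
          have : f u = (f u / u) * u := by field_simp
          rw [this]
          nlinarith
      have hθF := mul_pos hθ2' hF
      refine ⟨by linarith, by linarith [h3.2], ?_⟩
      have hstep : f u * u ≤ (α / k) * u * u := mul_le_mul_of_nonneg_right hineq hu.le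
      calc f u * u ≤ (α / k) * u * u := hstep
        _ = (1 / k) * (α * u ^ 2) := by ring
        _ ≤ (1 / k) * (V x * u ^ 2) := by
            apply mul_le_mul_of_nonneg_left _ h1k.le
            exact mul_le_mul_of_nonneg_right hVx (sq_nonneg u)
        _ = (1 / k) * V x * u ^ 2 := by ring
    · push_neg at hul
      have hG : Gpen N f α k ℓ Λ x u = primF f ℓ + (α / k) * (u ^ 2 - ℓ ^ 2) / 2 := by
        rw [hGout x hx u, hHgt u hul]
      have hg : gpen N f α k ℓ Λ x u = (α / k) * u := by
        unfold gpen ftil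
        rw [if_neg (not_lt.2 hu.le), if_neg hx, if_neg (not_lt.2 hu.le),
          if_neg (not_le.2 hul)]
      rw [hG, hg]
      have h3 := hf3 ℓ hℓpos
      have hF : 0 < primF f ℓ := by nlinarith [h3.1]
      have hθF := mul_pos hθ2' hF
      have h2F : 2 * primF f ℓ ≤ (α / k) * ℓ ^ 2 := by
        have h32 := h3.2
        rw [hfl] at h32
        nlinarith [h32, hθF]
      have hu2 : ℓ ^ 2 < u ^ 2 := by nlinarith
      have hprod : 0 < (α / k) * (u ^ 2 - ℓ ^ 2) := mul_pos hαk (by linarith)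
      refine ⟨by nlinarith [hF, hprod], by nlinarith [h2F, hprod], ?_⟩
      calc (α / k) * u * u = (1 / k) * (α * u ^ 2) := by ring
        _ ≤ (1 / k) * (V x * u ^ 2) := by
            apply mul_le_mul_of_nonneg_left _ h1k.le
            exact mul_le_mul_of_nonneg_right hVx (sq_nonneg u)
        _ = (1 / k) * V x * u ^ 2 := by ring
end

section
/- Suppose Γ : ℝ^N → ℝ is C¹ and has a compact set X of strict local minimum points in the sense that there exist δ > 0 and a δ-neighborhood X_δ with b := inf_{∂X_δ}Γ > a := Γ|_X (constant on X). If Φ_ε : ℝ^N → ℝ are C¹ functions with Φ_ε(ξ) = C₁Γ(εξ) + o_ε(1) uniformly on X_δ^ε = {ξ : εξ ∈ X_δ} (C₁ > 0), then for ε small the set Y^ε = {ξ ∈ X_δ^ε : Φ_ε(ξ) ≤ C₁(a+b)/2} is compact, satisfies X^ε ⊂ Y^ε ⊂ X_δ^ε, and Y^ε does not meet ∂X_δ^ε; consequently Φ_ε has at least cat(X, X_δ) critical points in X_δ^ε. -/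
open Filter Set Topology

def ContractibleInVia {X : Type*} [TopologicalSpace X] (U B : Set X) : Prop :=
  ∃ (h : X × ℝ → X) (x₀ : X), ContinuousOn h (U ×ˢ Set.Icc (0:ℝ) 1) ∧
    (∀ p ∈ U ×ˢ Set.Icc (0:ℝ) 1, h p ∈ B) ∧
    (∀ x ∈ U, h (x, 0) = x) ∧ (∀ x ∈ U, h (x, 1) = x₀)

noncomputable def catLS {X : Type*} [TopologicalSpace X] (A B : Set X) : ℕ :=
  sInf {n : ℕ | ∃ U : Fin n → Set X, (A ⊆ ⋃ i, U i) ∧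
    ∀ i, IsClosed (U i) ∧ ContractibleInVia (U i) B}

/-!
Rescaling by `ε` is a homeomorphism, so `cat(X, X_δ) = cat(X^ε, X_δ^ε)`. Since
`|Φ_ε - C₁Γ(ε·)| < C₁(b - a)/4` on `X_δ^ε`, we get `Φ_ε ≤ C₁(a + b)/2` on `X^ε` and
`Φ_ε > C₁(a + b)/2` on `∂X_δ^ε`, which gives the properties of `Y^ε`.

The count of critical points is a finite-dimensional Lusternik–Schnirelman theorem: if `Φ > L` on
the boundary of a compact set `D`, then the category in `D` of `{Φ ≤ L}` is at most the number of
critical points of `Φ` in it. It is proved by induction over the critical levels. A discrete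
gradient descent `y ↦ y - μ χ(Φ y) ∇Φ(y)`, joined up by straight-line homotopies between iterates,
pushes sublevel sets down inside `D` wherever `|∇Φ|` is bounded below. At a critical level the
critical points are covered by small balls, which are convex and hence contractible, and the rest of
the sublevel set is pushed below the level.
-/

section Deformation

variable {X : Type*} [TopologicalSpace X]

def DeformsTo (A A' B : Set X) : Prop :=
  ∃ h : X × ℝ → X, ContinuousOn h (A ×ˢ Icc (0:ℝ) 1) ∧
    (∀ p ∈ A ×ˢ Icc (0:ℝ) 1, h p ∈ B) ∧
    (∀ x ∈ A, h (x, 0) = x) ∧ (∀ x ∈ A, h (x, 1) ∈ A')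

theorem contractibleInVia_iff_exists_deformsTo {U B : Set X} :
    ContractibleInVia U B ↔ ∃ x₀, DeformsTo U {x₀} B :=
  ⟨fun ⟨h, x₀, hc, hB, h0, h1⟩ => ⟨x₀, h, hc, hB, h0, h1⟩,
    fun ⟨x₀, h, hc, hB, h0, h1⟩ => ⟨h, x₀, hc, hB, h0, h1⟩⟩

theorem DeformsTo.refl {A B : Set X} (hAB : A ⊆ B) : DeformsTo A A B :=
  ⟨Prod.fst, continuousOn_fst, fun _ hp => hAB hp.1, fun _ _ => rfl, fun _ hx => hx⟩

theorem DeformsTo.mono {A A' B A₀ A'' B' : Set X} (h : DeformsTo A A' B)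
    (hA : A₀ ⊆ A) (hA' : A' ⊆ A'') (hB : B ⊆ B') : DeformsTo A₀ A'' B' := by
  obtain ⟨f, hf, hfB, hf0, hf1⟩ := h
  exact ⟨f, hf.mono (prod_mono hA le_rfl), fun p hp => hB (hfB p ⟨hA hp.1, hp.2⟩),
    fun x hx => hf0 x (hA hx), fun x hx => hA' (hf1 x (hA hx))⟩

theorem DeformsTo.trans {A A₂ A₃ B : Set X} (h₁ : DeformsTo A A₂ B) (h₂ : DeformsTo A₂ A₃ B) :
    DeformsTo A A₃ B := by
  obtain ⟨f, hf, hfB, hf0, hf1⟩ := h₁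
  obtain ⟨g, hg, hgB, hg0, hg1⟩ := h₂
  set s := A ×ˢ Icc (0:ℝ) 1
  have first : MapsTo (fun p : X × ℝ => (p.1, 2 * p.2)) (s ∩ {p | p.2 ≤ 1 / 2}) s :=
    fun p ⟨⟨hx, ht⟩, (ht' : p.2 ≤ 1 / 2)⟩ =>
      ⟨hx, by simp only [mem_Icc] at ht ⊢; constructor <;> linarith⟩
  have second : MapsTo (fun p : X × ℝ => (f (p.1, 1), 2 * p.2 - 1))
      (s ∩ {p | 1 / 2 ≤ p.2}) (A₂ ×ˢ Icc 0 1) :=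
    fun p ⟨⟨hx, ht⟩, (ht' : 1 / 2 ≤ p.2)⟩ =>
      ⟨hf1 _ hx, by simp only [mem_Icc] at ht ⊢; constructor <;> linarith⟩
  refine ⟨fun p => if p.2 ≤ 1 / 2 then f (p.1, 2 * p.2) else g (f (p.1, 1), 2 * p.2 - 1),
    ?_, fun p hp => ?_, fun x hx => ?_, fun x hx => ?_⟩
  · refine ContinuousOn.if (fun p ⟨hp, hfr⟩ => ?_) ?_ ?_
    · have hp2 : p.2 = 1 / 2 := frontier_le_subset_eq continuous_snd continuous_const hfr
      simp only [hp2]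
      norm_num [hg0 _ (hf1 _ hp.1)]
    · refine hf.comp (by fun_prop) (first.mono_left (inter_subset_inter_right _ ?_))
      exact (isClosed_le continuous_snd continuous_const).closure_subset
    · have hf1c : ContinuousOn (fun p : X × ℝ => f (p.1, 1)) s :=
        hf.comp (by fun_prop) fun p hp => ⟨hp.1, by simp⟩
      refine hg.comp ((hf1c.mono inter_subset_left).prodMk (by fun_prop))
        (second.mono_left (inter_subset_inter_right _ ?_))
      simpa only [not_le] using closure_lt_subset_le continuous_const continuous_snd
  · by_cases ht : p.2 ≤ 1 / 2
    · simpa only [if_pos ht] using hfB _ (first ⟨hp, ht⟩)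
    · simpa only [if_neg ht] using hgB _ (second ⟨hp, (not_le.1 ht).le⟩)
  · simpa using hf0 x hx
  · norm_num [hg1 _ (hf1 x hx)]

theorem DeformsTo.contractibleInVia {A U B : Set X} (h : DeformsTo A U B)
    (hU : ContractibleInVia U B) : ContractibleInVia A B := by
  obtain ⟨x₀, hU⟩ := contractibleInVia_iff_exists_deformsTo.1 hU
  exact contractibleInVia_iff_exists_deformsTo.2 ⟨x₀, h.trans hU⟩

theorem ContractibleInVia.preimage_homeomorph {U B : Set X} (hU : ContractibleInVia U B)
    (e : X ≃ₜ X) : ContractibleInVia (e ⁻¹' U) (e ⁻¹' B) := by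
  obtain ⟨h, x₀, hc, hB, h0, h1⟩ := hU
  refine ⟨fun p => e.symm (h (e p.1, p.2)), e.symm x₀,
    e.symm.continuous.comp_continuousOn (hc.comp (by fun_prop) fun p hp => hp),
    fun p hp => ?_, fun x hx => by simp [h0 _ hx], fun x hx => by simp [h1 _ hx]⟩
  simpa using hB _ hp

end Deformation

section SegmentDeformation

variable {E : Type*} [AddCommGroup E] [Module ℝ E] [TopologicalSpace E] [IsTopologicalAddGroup E]
  [ContinuousSMul ℝ E]

theorem DeformsTo.of_segment {g : E → E} (hg : Continuous g) {A B : Set E}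
    (hseg : ∀ x ∈ A, segment ℝ x (g x) ⊆ B) : DeformsTo A (g '' A) B := by
  refine ⟨fun p => p.1 + p.2 • (g p.1 - p.1), by fun_prop, ?_, fun x _ => by simp,
    fun x hx => ⟨x, hx, by simp⟩⟩
  rintro ⟨x, t⟩ ⟨hx, ht⟩
  exact hseg x hx (by rw [segment_eq_image']; exact ⟨t, ht, rfl⟩)

theorem DeformsTo.iterate {g : E → E} (hg : Continuous g) {A B : Set E}
    (hseg : ∀ x ∈ A, ∀ t : ℕ, segment ℝ (g^[t] x) (g^[t + 1] x) ⊆ B) (T : ℕ) :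
    DeformsTo A (g^[T] '' A) B := by
  induction T with
  | zero =>
    simpa using DeformsTo.refl fun x hx => hseg x hx 0 (left_mem_segment _ _ _)
  | succ T ih =>
    rw [Function.iterate_succ', image_comp]
    refine ih.trans (DeformsTo.of_segment hg ?_)
    rintro _ ⟨x, hx, rfl⟩
    simpa only [Function.iterate_succ_apply'] using hseg x hx T

end SegmentDeformation

section Category

variable {X : Type*} [TopologicalSpace X]

def catSet (A B : Set X) : Set ℕ :=
  {n : ℕ | ∃ U : Fin n → Set X, (A ⊆ ⋃ i, U i) ∧ ∀ i, IsClosed (U i) ∧ ContractibleInVia (U i) B}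

theorem catLS_eq_sInf_catSet (A B : Set X) : catLS A B = sInf (catSet A B) := rfl

theorem natCard_mem_catSet {ι : Type*} [Finite ι] {A B : Set X} (U : ι → Set X)
    (hA : A ⊆ ⋃ i, U i) (hU : ∀ i, IsClosed (U i) ∧ ContractibleInVia (U i) B) :
    Nat.card ι ∈ catSet A B := by
  let e := Finite.equivFin ι
  refine ⟨U ∘ e.symm, fun x hx => ?_, fun i => hU _⟩
  obtain ⟨i, hi⟩ := mem_iUnion.1 (hA hx)
  exact mem_iUnion.2 ⟨e i, by simpa using hi⟩

theorem catSet_anti_left {A₀ A B : Set X} (h : A₀ ⊆ A) : catSet A B ⊆ catSet A₀ B :=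
  fun _ ⟨U, hA, hU⟩ => ⟨U, h.trans hA, hU⟩

theorem catLS_le_of_mem_catSet {A B : Set X} {n : ℕ} (h : n ∈ catSet A B) : catLS A B ≤ n :=
  Nat.sInf_le h

theorem catLS_mem_catSet {A B : Set X} (h : (catSet A B).Nonempty) : catLS A B ∈ catSet A B :=
  Nat.sInf_mem h

theorem catLS_mono_left {A₀ A B : Set X} (h : A₀ ⊆ A) (hA : (catSet A B).Nonempty) :
    catLS A₀ B ≤ catLS A B :=
  catLS_le_of_mem_catSet (catSet_anti_left h (catLS_mem_catSet hA))

theorem catLS_le_add {A A₁ A₂ B : Set X} (hA : A ⊆ A₁ ∪ A₂)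
    (h₁ : (catSet A₁ B).Nonempty) (h₂ : (catSet A₂ B).Nonempty) :
    catLS A B ≤ catLS A₁ B + catLS A₂ B := by
  obtain ⟨U₁, hc₁, hU₁⟩ := catLS_mem_catSet h₁
  obtain ⟨U₂, hc₂, hU₂⟩ := catLS_mem_catSet h₂
  have hcover : A ⊆ ⋃ i, Sum.elim U₁ U₂ i := by
    rw [iUnion_sum]
    exact hA.trans (union_subset_union hc₁ hc₂)
  simpa using catLS_le_of_mem_catSet
    (natCard_mem_catSet (Sum.elim U₁ U₂) hcover (Sum.forall.2 ⟨hU₁, hU₂⟩))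

theorem catLS_le_of_deformsTo {A A' B : Set X} (hA : IsClosed A) (hdef : DeformsTo A A' B)
    (hA' : (catSet A' B).Nonempty) : catLS A B ≤ catLS A' B := by
  obtain ⟨U, hc, hU⟩ := catLS_mem_catSet hA'
  obtain ⟨h, hcont, hB, h0, h1⟩ := hdef
  have hend : ContinuousOn (fun x => h (x, 1)) A :=
    hcont.comp (by fun_prop) fun x hx => ⟨hx, by simp⟩
  refine catLS_le_of_mem_catSet ⟨fun i => A ∩ (fun x => h (x, 1)) ⁻¹' U i, fun x hx => ?_,
    fun i => ⟨hend.preimage_isClosed_of_isClosed hA (hU i).1, ?_⟩⟩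
  · obtain ⟨i, hi⟩ := mem_iUnion.1 (hc (h1 x hx))
    exact mem_iUnion.2 ⟨i, hx, hi⟩
  · refine DeformsTo.contractibleInVia ?_ (hU i).2
    exact ⟨h, hcont.mono (prod_mono inter_subset_left le_rfl), fun p hp => hB p ⟨hp.1.1, hp.2⟩,
      fun x hx => h0 x hx.1, fun x hx => hx.2⟩

theorem catSet_preimage_homeomorph (e : X ≃ₜ X) {A B : Set X} :
    catSet A B ⊆ catSet (e ⁻¹' A) (e ⁻¹' B) :=
  fun _ ⟨U, hA, hU⟩ => ⟨fun i => e ⁻¹' U i, by simpa [preimage_iUnion] using preimage_mono hA,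
    fun i => ⟨(hU i).1.preimage e.continuous, (hU i).2.preimage_homeomorph e⟩⟩

theorem catLS_preimage_homeomorph (e : X ≃ₜ X) (A B : Set X) :
    catLS (e ⁻¹' A) (e ⁻¹' B) = catLS A B := by
  have h := catSet_preimage_homeomorph e.symm (A := e ⁻¹' A) (B := e ⁻¹' B)
  simp only [← preimage_comp, Homeomorph.self_comp_symm, preimage_id] at h
  rw [catLS_eq_sInf_catSet, catLS_eq_sInf_catSet,
    (catSet_preimage_homeomorph e).antisymm h]

theorem catLS_empty (B : Set X) : catLS ∅ B = 0 :=
  Nat.eq_zero_of_le_zero (catLS_le_of_mem_catSet ⟨finZeroElim, empty_subset _, finZeroElim⟩)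

end Category

section Analysis

theorem mem_interior_of_apply_le {X : Type*} [TopologicalSpace X] {Φ : X → ℝ} {D : Set X}
    {L : ℝ} (hD : IsClosed D) (hfront : ∀ x ∈ frontier D, L < Φ x) {x : X} (hx : x ∈ D)
    (hxL : Φ x ≤ L) : x ∈ interior D := by
  by_contra h
  exact (hfront x (by rw [hD.frontier_eq]; exact ⟨hx, h⟩)).not_ge hxL

theorem IsPreconnected.subset_of_apply_le {X : Type*} [TopologicalSpace X] {Φ : X → ℝ}
    {S D : Set X} {L : ℝ} (hS : IsPreconnected S) (hD : IsClosed D)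
    (hfront : ∀ x ∈ frontier D, L < Φ x) (hSD : (S ∩ D).Nonempty) (hSL : ∀ z ∈ S, Φ z ≤ L) :
    S ⊆ D := by
  refine (hS.subset_of_closure_inter_subset isOpen_interior ?_ ?_).trans interior_subset
  · obtain ⟨z, hzS, hzD⟩ := hSD
    exact ⟨z, hzS, mem_interior_of_apply_le hD hfront hzD (hSL z hzS)⟩
  · rintro z ⟨hzD, hzS⟩
    exact mem_interior_of_apply_le hD hfront
      ((closure_mono interior_subset).trans hD.closure_subset hzD) (hSL z hzS)

theorem IsCompact.exists_pos_forall_dist_lt {α β : Type*} [PseudoMetricSpace α]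
    [PseudoMetricSpace β] {K : Set α} (hK : IsCompact K) {f : α → β} (hf : Continuous f)
    {κ : ℝ} (hκ : 0 < κ) : ∃ r > 0, ∀ y ∈ K, ∀ z, dist z y < r → dist (f z) (f y) < κ := by
  obtain ⟨r, hr, hball⟩ := Metric.mem_uniformity_dist.1
    (hK.uniformContinuousAt_of_continuousAt f (fun y _ => hf.continuousAt)
      (Metric.dist_mem_uniformity hκ))
  exact ⟨r, hr, fun y hy z hz => by
    simpa [dist_comm] using hball (a := y) (b := z) (by rwa [dist_comm]) hy⟩

theorem Set.Finite.exists_pos_forall_eq_of_abs_sub_le {V : Set ℝ} (hV : V.Finite) (v : ℝ) :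
    ∃ η > 0, ∀ u ∈ V, |u - v| ≤ η → u = v := by
  obtain ⟨η, hη, hball⟩ := Metric.isOpen_iff.1 (hV.sdiff (t := {v})).isClosed.isOpen_compl v
    (by simp)
  refine ⟨η / 2, by positivity, fun u hu huv => by_contra fun hne => hball ?_ ⟨hu, hne⟩⟩
  rw [Metric.mem_ball, Real.dist_eq]
  linarith

theorem ncard_sep_le_eq_add {α : Type*} {D : Set α} {f : α → ℝ} {P : α → Prop} {c v η : ℝ}
    (hvc : v ≤ c) (hη : 0 < η) (hfin : {x ∈ D | f x ≤ c ∧ P x}.Finite)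
    (hgap : ∀ x ∈ D, f x ≤ c → P x → f x = v ∨ f x ≤ v - η) :
    {x ∈ D | f x ≤ c ∧ P x}.ncard =
      {x ∈ D | f x ≤ v - η ∧ P x}.ncard + {x ∈ D | f x = v ∧ P x}.ncard := by
  have hsplit : {x ∈ D | f x ≤ c ∧ P x} =
      {x ∈ D | f x ≤ v - η ∧ P x} ∪ {x ∈ D | f x = v ∧ P x} := by
    ext x
    constructor
    · rintro ⟨hxD, hxc, hx⟩
      rcases hgap x hxD hxc hx with h | h
      · exact Or.inr ⟨hxD, h, hx⟩
      · exact Or.inl ⟨hxD, h, hx⟩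
    · rintro (⟨hxD, h, hx⟩ | ⟨hxD, h, hx⟩)
      · exact ⟨hxD, by linarith, hx⟩
      · exact ⟨hxD, h.trans_le hvc, hx⟩
  rw [hsplit] at hfin ⊢
  exact ncard_union_eq (disjoint_left.2 fun x hx hx' => by linarith [hx.2.1, hx'.2.1])
    (hfin.subset subset_union_left) (hfin.subset subset_union_right)

theorem IsCompact.sublevel {X : Type*} [TopologicalSpace X] {D : Set X} (hD : IsCompact D)
    {Φ : X → ℝ} (hΦ : Continuous Φ) (c : ℝ) : IsCompact {y ∈ D | Φ y ≤ c} :=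
  hD.inter_right (isClosed_le hΦ continuous_const)

end Analysis

section NormedSpace

variable {E : Type*} [NormedAddCommGroup E] [NormedSpace ℝ E]

theorem Convex.contractibleInVia {C B : Set E} (hC : Convex ℝ C) (hne : C.Nonempty)
    (hCB : C ⊆ B) : ContractibleInVia C B := by
  obtain ⟨c₀, hc₀⟩ := hne
  refine ⟨fun p => (1 - p.2) • p.1 + p.2 • c₀, c₀, by fun_prop, ?_, fun x _ => by simp,
    fun x _ => by simp⟩
  rintro ⟨x, t⟩ ⟨hx, ht, ht'⟩
  exact hCB (hC hx hc₀ (by linarith) ht (by ring))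

theorem ncard_mem_catSet_biUnion_closedBall {S B : Set E} (hS : S.Finite) {ρ : ℝ} (hρ : 0 ≤ ρ)
    (hSB : ∀ z ∈ S, Metric.closedBall z ρ ⊆ B) :
    S.ncard ∈ catSet (⋃ z ∈ S, Metric.closedBall z ρ) B := by
  have := hS.to_subtype
  rw [← Nat.card_coe_set_eq]
  refine natCard_mem_catSet (fun z : S => Metric.closedBall (z : E) ρ) (by rw [iUnion_coe_set])
    fun z => ⟨Metric.isClosed_closedBall, (convex_closedBall _ _).contractibleInVia
      ⟨z, Metric.mem_closedBall_self hρ⟩ (hSB z z.2)⟩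

theorem catSet_nonempty_of_subset_interior {K B : Set E} (hK : IsCompact K)
    (hKB : K ⊆ interior B) : (catSet K B).Nonempty := by
  obtain ⟨ρ, hρ, hρB⟩ := hK.exists_cthickening_subset_open isOpen_interior hKB
  obtain ⟨S, hSK, hS, hcover⟩ := hK.finite_cover_balls hρ
  refine ⟨_, catSet_anti_left ?_ (ncard_mem_catSet_biUnion_closedBall hS hρ.le fun z hz =>
    (Metric.closedBall_subset_cthickening (hSK hz) ρ).trans (hρB.trans interior_subset))⟩
  exact hcover.trans (biUnion_mono subset_rfl fun z _ => Metric.ball_subset_closedBall)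

variable {Φ : E → ℝ} {D : Set E} {L : ℝ}

theorem catSet_nonempty_of_subset_sublevel (hD : IsClosed D)
    (hfront : ∀ x ∈ frontier D, L < Φ x) {K : Set E} (hK : IsCompact K)
    (hKD : K ⊆ {y ∈ D | Φ y ≤ L}) : (catSet K D).Nonempty :=
  catSet_nonempty_of_subset_interior hK fun _ hy =>
    mem_interior_of_apply_le hD hfront (hKD hy).1 (hKD hy).2

theorem catLS_le_catLS_diff_thickening_add_ncard {Y B S : Set E} (hY : IsCompact Y)
    (hYB : Y ⊆ interior B) (hS : S.Finite) {ρ : ℝ} (hρ : 0 < ρ)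
    (hSB : ∀ z ∈ S, Metric.closedBall z ρ ⊆ B) :
    catLS Y B ≤ catLS (Y \ Metric.thickening ρ S) B + S.ncard := by
  have hcover : Y ⊆ (Y \ Metric.thickening ρ S) ∪ ⋃ z ∈ S, Metric.closedBall z ρ := by
    intro y hy
    by_cases h : y ∈ Metric.thickening ρ S
    · obtain ⟨z, hz, hyz⟩ := Metric.mem_thickening_iff.1 h
      exact Or.inr (mem_biUnion hz (Metric.mem_closedBall.2 hyz.le))
    · exact Or.inl ⟨hy, h⟩
  have hballs := ncard_mem_catSet_biUnion_closedBall hS hρ.le hSB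
  refine (catLS_le_add hcover (catSet_nonempty_of_subset_interior
    (hY.diff Metric.isOpen_thickening) (sdiff_subset.trans hYB)) ⟨_, hballs⟩).trans ?_
  exact Nat.add_le_add_left (catLS_le_of_mem_catSet hballs) _

theorem exists_fderiv_eq_zero_of_sublevel_nonempty (hΦ : Continuous Φ) (hD : IsCompact D)
    (hfront : ∀ x ∈ frontier D, L < Φ x) {c : ℝ} (hc : c ≤ L)
    (hne : {y ∈ D | Φ y ≤ c}.Nonempty) : ∃ x ∈ D, Φ x ≤ c ∧ fderiv ℝ Φ x = 0 := by
  obtain ⟨x, ⟨hxD, hxc⟩, hmin⟩ := (hD.sublevel hΦ c).exists_isMinOn hne hΦ.continuousOn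
  refine ⟨x, hxD, hxc, IsLocalMin.fderiv_eq_zero ?_⟩
  filter_upwards [isOpen_interior.mem_nhds
    (mem_interior_of_apply_le hD.isClosed hfront hxD (hxc.trans hc))] with y hy
  by_contra! h
  exact h.not_ge (hmin ⟨interior_subset hy, by linarith⟩)

end NormedSpace

section CoordGradient

variable {ι : Type*} [Fintype ι] [DecidableEq ι]

noncomputable def coordGradient (Φ : (ι → ℝ) → ℝ) (x : ι → ℝ) : ι → ℝ :=
  fun i => fderiv ℝ Φ x (Pi.single i 1)

/-- `|∇Φ(x)|²` for the Euclidean structure; the norm of `ι → ℝ` itself is the sup norm. -/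
noncomputable def gradientNormSq (Φ : (ι → ℝ) → ℝ) (x : ι → ℝ) : ℝ :=
  ∑ i, coordGradient Φ x i ^ 2

variable {Φ : (ι → ℝ) → ℝ}

theorem fderiv_apply_eq_sum_coordGradient (x y : ι → ℝ) :
    fderiv ℝ Φ x y = ∑ i, y i * coordGradient Φ x i := by
  conv_lhs => rw [pi_eq_sum_univ' y]
  simp [map_sum, coordGradient]

theorem fderiv_apply_coordGradient (x : ι → ℝ) :
    fderiv ℝ Φ x (coordGradient Φ x) = gradientNormSq Φ x := by
  simp [fderiv_apply_eq_sum_coordGradient, gradientNormSq, sq]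

theorem gradientNormSq_nonneg (x : ι → ℝ) : 0 ≤ gradientNormSq Φ x :=
  Finset.sum_nonneg fun _ _ => sq_nonneg _

theorem fderiv_eq_zero_of_gradientNormSq_eq_zero {x : ι → ℝ} (h : gradientNormSq Φ x = 0) :
    fderiv ℝ Φ x = 0 := by
  have hzero : ∀ i, coordGradient Φ x i = 0 := fun i => by
    simpa using (Finset.sum_eq_zero_iff_of_nonneg fun j _ => sq_nonneg _).1 h i
      (Finset.mem_univ i)
  exact ContinuousLinearMap.ext fun y => by simp [fderiv_apply_eq_sum_coordGradient, hzero]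

theorem norm_coordGradient_le_sqrt (x : ι → ℝ) :
    ‖coordGradient Φ x‖ ≤ √(gradientNormSq Φ x) := by
  refine (pi_norm_le_iff_of_nonneg (Real.sqrt_nonneg _)).2 fun i => ?_
  rw [Real.norm_eq_abs, ← Real.sqrt_sq_eq_abs]
  exact Real.sqrt_le_sqrt (Finset.single_le_sum (f := fun j => coordGradient Φ x j ^ 2)
    (fun j _ => sq_nonneg _) (Finset.mem_univ i))

theorem ContDiff.continuous_coordGradient (hΦ : ContDiff ℝ 1 Φ) :
    Continuous (coordGradient Φ) :=
  continuous_pi fun _ => (hΦ.continuous_fderiv one_ne_zero).clm_apply continuous_const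

theorem ContDiff.continuous_gradientNormSq (hΦ : ContDiff ℝ 1 Φ) :
    Continuous (gradientNormSq Φ) :=
  continuous_finsetSum _ fun i _ => ((continuous_apply i).comp hΦ.continuous_coordGradient).pow 2

end CoordGradient

noncomputable def ramp (α γ t : ℝ) : ℝ := max 0 (min 1 ((t - (α - γ)) / γ))

theorem ramp_nonneg (α γ t : ℝ) : 0 ≤ ramp α γ t := le_max_left _ _

theorem ramp_le_one (α γ t : ℝ) : ramp α γ t ≤ 1 := max_le zero_le_one (min_le_left _ _)

theorem lt_of_ramp_pos {α γ t : ℝ} (hγ : 0 < γ) (h : 0 < ramp α γ t) : α - γ < t := by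
  by_contra! ht
  have : (t - (α - γ)) / γ ≤ 0 := div_nonpos_of_nonpos_of_nonneg (by linarith) hγ.le
  exact h.not_ge (max_le le_rfl ((min_le_right _ _).trans this))

theorem ramp_eq_one {α γ t : ℝ} (hγ : 0 < γ) (ht : α ≤ t) : ramp α γ t = 1 := by
  have : 1 ≤ (t - (α - γ)) / γ := by rw [le_div_iff₀ hγ]; linarith
  simp [ramp, min_eq_left this]

theorem continuous_ramp (α γ : ℝ) : Continuous (ramp α γ) := by
  unfold ramp
  fun_prop

section Descent

variable {ι : Type*} [Fintype ι] [DecidableEq ι] {Φ : (ι → ℝ) → ℝ} {D : Set (ι → ℝ)} {L : ℝ}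

theorem abs_apply_sub_smul_coordGradient_le (hΦ : Differentiable ℝ Φ) {y : ι → ℝ} {r s : ℝ}
    (hs : 0 ≤ s) (hr : s * √(gradientNormSq Φ y) ≤ r)
    (hκ : ∀ z ∈ Metric.closedBall y r,
      ‖fderiv ℝ Φ z - fderiv ℝ Φ y‖ ≤ √(gradientNormSq Φ y) / 2) :
    |Φ (y - s • coordGradient Φ y) - Φ y + s * gradientNormSq Φ y| ≤
      s * gradientNormSq Φ y / 2 := by
  set q := gradientNormSq Φ y
  set y' := y - s • coordGradient Φ y
  have hstep : ‖y' - y‖ ≤ s * √q := by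
    rw [sub_sub_cancel_left, norm_neg, norm_smul, Real.norm_of_nonneg hs]
    exact mul_le_mul_of_nonneg_left (norm_coordGradient_le_sqrt y) hs
  have hy' : y' ∈ Metric.closedBall y r := by
    rw [Metric.mem_closedBall, dist_eq_norm]
    exact hstep.trans hr
  have hmvt := (convex_closedBall y r).norm_image_sub_le_of_norm_hasFDerivWithin_le'
    (fun z _ => (hΦ z).hasFDerivAt.hasFDerivWithinAt) hκ
    (Metric.mem_closedBall_self ((by positivity : 0 ≤ s * √q).trans hr)) hy'
  have hlin : fderiv ℝ Φ y (y' - y) = -(s * q) := by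
    rw [sub_sub_cancel_left, map_neg, map_smul, fderiv_apply_coordGradient, smul_eq_mul]
  rw [hlin, sub_neg_eq_add, Real.norm_eq_abs] at hmvt
  calc _ ≤ √q / 2 * ‖y' - y‖ := hmvt
    _ ≤ √q / 2 * (s * √q) := by gcongr
    _ = s * q / 2 := by linear_combination (s / 2) * Real.mul_self_sqrt (gradientNormSq_nonneg y)

def IsDescentStepSize (Φ : (ι → ℝ) → ℝ) (D : Set (ι → ℝ)) (σ γ μ : ℝ) : Prop :=
  ∀ y ∈ D, σ ≤ gradientNormSq Φ y → ∀ s ∈ Icc 0 μ,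
    Φ (y - s • coordGradient Φ y) ≤ Φ y - s * gradientNormSq Φ y / 2 ∧
    Φ y - γ ≤ Φ (y - s • coordGradient Φ y)

theorem exists_pos_isDescentStepSize (hΦ : ContDiff ℝ 1 Φ) (hD : IsCompact D) {σ γ : ℝ}
    (hσ : 0 < σ) (hγ : 0 < γ) : ∃ μ > 0, IsDescentStepSize Φ D σ γ μ := by
  obtain ⟨Q₀, hQ₀⟩ := hD.bddAbove_image hΦ.continuous_gradientNormSq.continuousOn
  set Q := max Q₀ 1
  have hQ : ∀ y ∈ D, gradientNormSq Φ y ≤ Q :=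
    fun y hy => (hQ₀ (mem_image_of_mem _ hy)).trans (le_max_left _ _)
  have hQpos : 0 < Q := lt_max_of_lt_right one_pos
  obtain ⟨r, hr, hcont⟩ := hD.exists_pos_forall_dist_lt (hΦ.continuous_fderiv one_ne_zero)
    (κ := √σ / 2) (by positivity)
  refine ⟨min (r / (2 * √Q)) (γ / (2 * Q)), by positivity, fun y hy hσy s ⟨hs, hsμ⟩ => ?_⟩
  have hsq : s * gradientNormSq Φ y ≤ γ / 2 := calc
    _ ≤ γ / (2 * Q) * Q :=
      mul_le_mul (hsμ.trans (min_le_right _ _)) (hQ y hy) (gradientNormSq_nonneg y) (by positivity)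
    _ = γ / 2 := by field_simp
  have hsr : s * √(gradientNormSq Φ y) ≤ r / 2 := calc
    _ ≤ r / (2 * √Q) * √Q :=
      mul_le_mul (hsμ.trans (min_le_left _ _)) (Real.sqrt_le_sqrt (hQ y hy)) (by positivity)
        (by positivity)
    _ = r / 2 := by field_simp
  have hκ : ∀ z ∈ Metric.closedBall y (r / 2),
      ‖fderiv ℝ Φ z - fderiv ℝ Φ y‖ ≤ √(gradientNormSq Φ y) / 2 := fun z hz => by
    rw [← dist_eq_norm]
    refine (hcont y hy z ?_).le.trans (by gcongr)
    linarith [Metric.mem_closedBall.1 hz]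
  have h := abs_le.1 (abs_apply_sub_smul_coordGradient_le (hΦ.differentiable one_ne_zero) hs hsr hκ)
  constructor <;> linarith [h.1, h.2]

theorem gradient_step_spec (hD : IsClosed D) (hfront : ∀ x ∈ frontier D, L < Φ x)
    {σ γ μ : ℝ} (hσ : 0 < σ) (hγ : 0 ≤ γ)
    (hμ : IsDescentStepSize Φ D σ γ μ)
    {y : ι → ℝ} (hy : y ∈ D) (hyL : Φ y ≤ L) {c : ℝ} (hc : c ∈ Icc 0 μ)
    (hcσ : 0 < c → σ ≤ gradientNormSq Φ y) :
    segment ℝ y (y - c • coordGradient Φ y) ⊆ D ∧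
      Φ (y - c • coordGradient Φ y) ≤ Φ y - c * σ / 2 ∧
      Φ y - γ ≤ Φ (y - c • coordGradient Φ y) ∧
      dist (y - c • coordGradient Φ y) y ≤ 2 / √σ * (Φ y - Φ (y - c • coordGradient Φ y)) := by
  rcases hc.1.eq_or_lt with rfl | hcpos
  · simp [hy, hγ]
  have hq := hcσ hcpos
  set q := gradientNormSq Φ y
  set v := coordGradient Φ y
  have hdrop : Φ (y - c • v) ≤ Φ y - c * q / 2 := (hμ y hy hq c hc).1
  refine ⟨?_, by nlinarith, (hμ y hy hq c hc).2, ?_⟩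
  · refine (convex_segment _ _).isPreconnected.subset_of_apply_le hD hfront
      ⟨y, left_mem_segment _ _ _, hy⟩ ?_
    rw [segment_eq_image']
    rintro _ ⟨θ, ⟨hθ0, hθ1⟩, rfl⟩
    have hθc : θ * c ∈ Icc 0 μ := ⟨by positivity, (mul_le_of_le_one_left hc.1 hθ1).trans hc.2⟩
    have hpt : y + θ • (y - c • v - y) = y - (θ * c) • v := by
      rw [sub_sub_cancel_left, smul_neg, smul_smul, sub_eq_add_neg]
    dsimp only
    rw [hpt]
    have hq₀ : 0 ≤ q := gradientNormSq_nonneg y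
    linarith [(hμ y hy hq _ hθc).1, mul_nonneg (mul_nonneg hθ0 hc.1) hq₀]
  · have hsqrt : √σ * √q ≤ q := calc
      √σ * √q ≤ √q * √q := by gcongr
      _ = q := Real.mul_self_sqrt (gradientNormSq_nonneg y)
    rw [dist_eq_norm, sub_sub_cancel_left, norm_neg, norm_smul, Real.norm_of_nonneg hc.1]
    calc c * ‖v‖ ≤ c * √q := by gcongr; exact norm_coordGradient_le_sqrt y
      _ = 2 / √σ * (c * (√σ * √q) / 2) := by field_simp
      _ ≤ 2 / √σ * (c * q / 2) := by gcongr
      _ ≤ 2 / √σ * (Φ y - Φ (y - c • v)) := by gcongr; linarith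

noncomputable def descentStep (Φ : (ι → ℝ) → ℝ) (μ α γ : ℝ) (y : ι → ℝ) : ι → ℝ :=
  y - (μ * ramp α γ (Φ y)) • coordGradient Φ y

theorem ContDiff.continuous_descentStep (hΦ : ContDiff ℝ 1 Φ) (μ α γ : ℝ) :
    Continuous (descentStep Φ μ α γ) :=
  continuous_id.sub (((continuous_ramp α γ).comp hΦ.continuous).const_mul μ |>.smul
    hΦ.continuous_coordGradient)

theorem descentStep_spec (hD : IsClosed D) (hfront : ∀ x ∈ frontier D, L < Φ x)
    {σ γ μ α : ℝ} (hσ : 0 < σ) (hγ : 0 < γ) (hμ₀ : 0 ≤ μ)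
    (hμ : IsDescentStepSize Φ D σ γ μ)
    {y : ι → ℝ} (hy : y ∈ D) (hyL : Φ y ≤ L) (hσy : α - γ < Φ y → σ ≤ gradientNormSq Φ y) :
    segment ℝ y (descentStep Φ μ α γ y) ⊆ D ∧
      Φ (descentStep Φ μ α γ y) ≤ Φ y ∧
      (α ≤ Φ y → Φ (descentStep Φ μ α γ y) ≤ Φ y - μ * σ / 2) ∧
      min (α - 2 * γ) (Φ y) ≤ Φ (descentStep Φ μ α γ y) ∧
      dist (descentStep Φ μ α γ y) y ≤ 2 / √σ * (Φ y - Φ (descentStep Φ μ α γ y)) := by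
  unfold descentStep
  have hr₀ := ramp_nonneg α γ (Φ y)
  have hc : μ * ramp α γ (Φ y) ∈ Icc 0 μ :=
    ⟨by positivity, mul_le_of_le_one_right hμ₀ (ramp_le_one _ _ _)⟩
  obtain ⟨hseg, hdrop, hlow, hdist⟩ := gradient_step_spec hD hfront hσ hγ.le hμ hy hyL hc
    fun h => hσy (lt_of_ramp_pos hγ (pos_of_mul_pos_right h hμ₀))
  refine ⟨hseg, by nlinarith [mul_nonneg (mul_nonneg hμ₀ hr₀) hσ.le],
    fun hα => by simpa [ramp_eq_one hγ hα] using hdrop, ?_, hdist⟩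
  rcases hr₀.eq_or_lt with h0 | hpos
  · simp [← h0]
  · exact min_le_of_left_le (by linarith [lt_of_ramp_pos hγ hpos])

/-- Along the descent orbit of `x` the distance travelled is controlled by the drop of `Φ`, so the
orbit never leaves the `Δ`-neighbourhood of `x` where `|∇Φ|² ≥ σ` is assumed. -/
theorem descentStep_iterate_spec (hD : IsClosed D) (hfront : ∀ x ∈ frontier D, L < Φ x)
    {σ γ μ α β Δ : ℝ} (hσ : 0 < σ) (hγ : 0 < γ) (hμ₀ : 0 ≤ μ)
    (hμ : IsDescentStepSize Φ D σ γ μ)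
    (hαβ : α ≤ β) (hβL : β ≤ L) (hΔ : 2 / √σ * (β - α + 2 * γ) ≤ Δ)
    {x : ι → ℝ} (hx : x ∈ D) (hxβ : Φ x ≤ β)
    (hgrad : ∀ y ∈ D, α - γ ≤ Φ y → Φ y ≤ β → dist y x ≤ Δ → σ ≤ gradientNormSq Φ y) (t : ℕ) :
    segment ℝ ((descentStep Φ μ α γ)^[t] x) ((descentStep Φ μ α γ)^[t + 1] x) ⊆ D ∧
      Φ ((descentStep Φ μ α γ)^[t] x) ≤ max α (Φ x - t * (μ * σ / 2)) := by
  set g := descentStep Φ μ α γ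
  let Inv : (ι → ℝ) → Prop := fun y => y ∈ D ∧ Φ y ≤ Φ x ∧ min (α - 2 * γ) (Φ x) ≤ Φ y ∧
    dist y x ≤ 2 / √σ * (Φ x - Φ y)
  have step : ∀ y, Inv y → segment ℝ y (g y) ⊆ D ∧ Φ (g y) ≤ Φ y ∧
      (α ≤ Φ y → Φ (g y) ≤ Φ y - μ * σ / 2) ∧ Inv (g y) := by
    rintro y ⟨hyD, hyx, hmin, hdist⟩
    have hnear : dist y x ≤ Δ := by
      refine hdist.trans (le_trans ?_ hΔ)
      gcongr
      rcases le_total (α - 2 * γ) (Φ x) with h | h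
      · rw [min_eq_left h] at hmin; linarith
      · rw [min_eq_right h] at hmin; linarith
    obtain ⟨hseg, hdec, hα, hmin', hdist'⟩ := descentStep_spec hD hfront hσ hγ hμ₀ hμ hyD
      (by linarith) fun h => hgrad y hyD h.le (hyx.trans hxβ) hnear
    refine ⟨hseg, hdec, hα, hseg (right_mem_segment _ _ _), hdec.trans hyx,
      (le_min (min_le_left _ _) hmin).trans hmin', ?_⟩
    calc dist (g y) x ≤ dist (g y) y + dist y x := dist_triangle _ _ _
      _ ≤ 2 / √σ * (Φ y - Φ (g y)) + 2 / √σ * (Φ x - Φ y) := add_le_add hdist' hdist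
      _ = 2 / √σ * (Φ x - Φ (g y)) := by ring
  have hinv : ∀ t : ℕ, Inv (g^[t] x) ∧ Φ (g^[t] x) ≤ max α (Φ x - t * (μ * σ / 2)) := by
    intro t
    induction t with
    | zero => exact ⟨⟨hx, le_rfl, min_le_right _ _, by simp⟩, by simp⟩
    | succ t ih =>
      obtain ⟨-, hdec, hα, hinv'⟩ := step _ ih.1
      rw [Function.iterate_succ_apply']
      refine ⟨hinv', ?_⟩
      have hμσ : 0 ≤ μ * σ / 2 := by positivity
      rcases lt_or_ge (Φ (g^[t] x)) α with h | h
      · exact le_max_of_le_left (by linarith)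
      · rcases le_max_iff.1 ih.2 with h' | h'
        · exact le_max_of_le_left (by linarith [hα h])
        · exact le_max_of_le_right (by push_cast; linarith [hα h])
  exact ⟨by simpa only [Function.iterate_succ_apply'] using (step _ (hinv t).1).1, (hinv t).2⟩

theorem deformsTo_sublevel (hΦ : ContDiff ℝ 1 Φ) (hD : IsCompact D)
    (hfront : ∀ x ∈ frontier D, L < Φ x) {A : Set (ι → ℝ)} {α β γ σ Δ : ℝ} (hσ : 0 < σ)
    (hγ : 0 < γ) (hαβ : α ≤ β) (hβL : β ≤ L) (hΔ : 2 / √σ * (β - α + 2 * γ) ≤ Δ)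
    (hA : A ⊆ {y ∈ D | Φ y ≤ β})
    (hgrad : ∀ y ∈ D, α - γ ≤ Φ y → Φ y ≤ β → (∃ x ∈ A, dist y x ≤ Δ) →
      σ ≤ gradientNormSq Φ y) :
    DeformsTo A {y ∈ D | Φ y ≤ α} D := by
  obtain ⟨μ, hμ, hstep⟩ := exists_pos_isDescentStepSize hΦ hD hσ hγ
  have horbit (x) (hx : x ∈ A) := descentStep_iterate_spec hD.isClosed hfront hσ hγ hμ.le hstep
    hαβ hβL hΔ (hA hx).1 (hA hx).2 fun y hy h₁ h₂ h₃ => hgrad y hy h₁ h₂ ⟨x, hx, h₃⟩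
  obtain ⟨T, hT⟩ := exists_nat_gt ((β - α) / (μ * σ / 2))
  rw [div_lt_iff₀ (by positivity)] at hT
  refine (DeformsTo.iterate (hΦ.continuous_descentStep μ α γ) (fun x hx t => (horbit x hx t).1)
    T).mono subset_rfl ?_ subset_rfl
  rintro _ ⟨x, hx, rfl⟩
  refine ⟨(horbit x hx T).1 (left_mem_segment _ _ _), (horbit x hx T).2.trans (max_le le_rfl ?_)⟩
  linarith [(hA hx).2]

end Descent

section LusternikSchnirelmann

variable {ι : Type*} [Fintype ι] [DecidableEq ι] {Φ : (ι → ℝ) → ℝ} {D : Set (ι → ℝ)} {L : ℝ}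

theorem exists_pos_le_gradientNormSq (hΦ : ContDiff ℝ 1 Φ) {K : Set (ι → ℝ)} (hK : IsCompact K)
    (hcrit : ∀ y ∈ K, fderiv ℝ Φ y ≠ 0) : ∃ σ > 0, ∀ y ∈ K, σ ≤ gradientNormSq Φ y :=
  hK.exists_forall_le' hΦ.continuous_gradientNormSq.continuousOn fun y hy =>
    (gradientNormSq_nonneg y).lt_of_ne fun h =>
      hcrit y hy (fderiv_eq_zero_of_gradientNormSq_eq_zero h.symm)

theorem catLS_sublevel_le_of_forall_fderiv_ne (hΦ : ContDiff ℝ 1 Φ) (hD : IsCompact D)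
    (hfront : ∀ x ∈ frontier D, L < Φ x) {a b c : ℝ} (hab : a < b) (hbc : b ≤ c) (hcL : c ≤ L)
    (hcrit : ∀ x ∈ D, a ≤ Φ x → Φ x ≤ c → fderiv ℝ Φ x ≠ 0) :
    catLS {y ∈ D | Φ y ≤ c} D ≤ catLS {y ∈ D | Φ y ≤ b} D := by
  have hΦc := hΦ.continuous
  obtain ⟨σ, hσ, hσK⟩ := exists_pos_le_gradientNormSq hΦ (K := {y ∈ D | a ≤ Φ y ∧ Φ y ≤ c})
    (hD.inter_right ((isClosed_le continuous_const hΦc).inter (isClosed_le hΦc continuous_const)))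
    fun y hy => hcrit y hy.1 hy.2.1 hy.2.2
  refine catLS_le_of_deformsTo (hD.sublevel hΦc c).isClosed ?_
    (catSet_nonempty_of_subset_sublevel hD.isClosed hfront (hD.sublevel hΦc b)
      fun y hy => ⟨hy.1, hy.2.trans (hbc.trans hcL)⟩)
  exact deformsTo_sublevel hΦ hD hfront hσ (sub_pos.2 hab) hbc hcL le_rfl subset_rfl
    fun y hy h₁ h₂ _ => hσK y ⟨hy, by linarith, h₂⟩

/-- Crossing an isolated critical level `v` costs at most the number of critical points on it:
away from a neighbourhood of these points the gradient is bounded below, so the rest of the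
sublevel set descends below `v`. -/
theorem exists_catLS_sublevel_le_add_ncard (hΦ : ContDiff ℝ 1 Φ) (hD : IsCompact D)
    (hfront : ∀ x ∈ frontier D, L < Φ x) {v η₀ : ℝ} (hvL : v ≤ L) (hη₀ : 0 < η₀)
    (hZv : {x ∈ D | Φ x = v ∧ fderiv ℝ Φ x = 0}.Finite)
    (hgap : ∀ x ∈ D, Φ x ≤ L → |Φ x - v| ≤ η₀ → fderiv ℝ Φ x = 0 → Φ x = v) :
    ∃ η ∈ Ioc 0 η₀, ∀ b ∈ Icc v (v + η), b ≤ L →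
      catLS {y ∈ D | Φ y ≤ b} D ≤
        catLS {y ∈ D | Φ y ≤ v - η} D + {x ∈ D | Φ x = v ∧ fderiv ℝ Φ x = 0}.ncard := by
  set Zv := {x ∈ D | Φ x = v ∧ fderiv ℝ Φ x = 0}
  have hΦc := hΦ.continuous
  obtain ⟨ρ, hρ, hρD⟩ := hZv.isCompact.exists_cthickening_subset_open isOpen_interior
    fun z hz => mem_interior_of_apply_le hD.isClosed hfront hz.1 (hz.2.1.trans_le hvL)
  obtain ⟨σ, hσ, hσK⟩ := exists_pos_le_gradientNormSq hΦ
    (K := {y ∈ D | Φ y ≤ L ∧ |Φ y - v| ≤ η₀} \ Metric.thickening (ρ / 2) Zv)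
    ((hD.inter_right ((isClosed_le hΦc continuous_const).inter
      (isClosed_le (hΦc.sub continuous_const).abs continuous_const))).diff Metric.isOpen_thickening)
    fun y ⟨⟨hyD, hyL, hyv⟩, hy⟩ hcrit => hy <| Metric.self_subset_thickening (half_pos hρ) _
      ⟨hyD, hgap y hyD hyL hyv hcrit, hcrit⟩
  -- `η ≤ ρ√σ/16` keeps descent orbits within `ρ/2` of their start (`Δ := ρ / 2` below)
  set η := min (η₀ / 2) (ρ * √σ / 16)
  have hη : 0 < η := by positivity
  refine ⟨η, ⟨hη, by linarith [min_le_left (η₀ / 2) (ρ * √σ / 16)]⟩, fun b ⟨hvb, hbη⟩ hbL => ?_⟩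
  have hY := hD.sublevel hΦc b
  refine (catLS_le_catLS_diff_thickening_add_ncard hY
    (fun y hy => mem_interior_of_apply_le hD.isClosed hfront hy.1 (hy.2.trans hbL)) hZv hρ
    fun z hz => (Metric.closedBall_subset_cthickening hz ρ).trans
      (hρD.trans interior_subset)).trans (Nat.add_le_add_right ?_ _)
  refine catLS_le_of_deformsTo (hY.diff Metric.isOpen_thickening).isClosed ?_
    (catSet_nonempty_of_subset_sublevel hD.isClosed hfront (hD.sublevel hΦc _)
      fun y hy => ⟨hy.1, by linarith [hy.2]⟩)
  refine deformsTo_sublevel hΦ hD hfront hσ hη (Δ := ρ / 2) (by linarith) hbL ?_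
    (fun y hy => hy.1) ?_
  · calc 2 / √σ * (b - (v - η) + 2 * η) ≤ 2 / √σ * (4 * (ρ * √σ / 16)) := by
          gcongr; linarith [min_le_right (η₀ / 2) (ρ * √σ / 16)]
      _ = ρ / 2 := by field_simp; ring
  · rintro y hyD hylo hyb ⟨x, ⟨-, hx⟩, hyx⟩
    refine hσK y ⟨⟨hyD, hyb.trans hbL, abs_le.2 ⟨?_, ?_⟩⟩, fun hy => hx ?_⟩
    · linarith [min_le_left (η₀ / 2) (ρ * √σ / 16)]
    · linarith [min_le_left (η₀ / 2) (ρ * √σ / 16)]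
    · obtain ⟨z, hz, hyz⟩ := Metric.mem_thickening_iff.1 hy
      refine Metric.mem_thickening_iff.2 ⟨z, hz, ?_⟩
      linarith [dist_triangle x y z, dist_comm x y]

/-- Below the top critical value `v ≤ c` the sublevel set descends to just above `v`, crosses
`v` at the cost of the critical points on it, and the rest is counted by induction. -/
theorem catLS_sublevel_le_ncard_critical (hΦ : ContDiff ℝ 1 Φ) (hD : IsCompact D)
    (hfront : ∀ x ∈ frontier D, L < Φ x) (hZ : {x ∈ D | Φ x ≤ L ∧ fderiv ℝ Φ x = 0}.Finite)
    {c : ℝ} (hc : c ≤ L) :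
    catLS {y ∈ D | Φ y ≤ c} D ≤ {x ∈ D | Φ x ≤ c ∧ fderiv ℝ Φ x = 0}.ncard := by
  induction hn : {x ∈ D | Φ x ≤ c ∧ fderiv ℝ Φ x = 0}.ncard using Nat.strong_induction_on
    generalizing c with
  | _ n ih =>
  set Zc := {x ∈ D | Φ x ≤ c ∧ fderiv ℝ Φ x = 0}
  have hZc : Zc.Finite := hZ.subset fun x hx => ⟨hx.1, hx.2.1.trans hc, hx.2.2⟩
  rcases Zc.eq_empty_or_nonempty with hempty | hne
  · have hY : {y ∈ D | Φ y ≤ c} = ∅ := by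
      by_contra h
      obtain ⟨x, hx⟩ := exists_fderiv_eq_zero_of_sublevel_nonempty hΦ.continuous hD hfront hc
        (nonempty_iff_ne_empty.2 h)
      exact hempty.subset hx
    simp [hY, catLS_empty]
  obtain ⟨w, ⟨hwD, hwc, hwcrit⟩, hwmax⟩ := exists_max_image Zc Φ hZc hne
  set v := Φ w
  obtain ⟨η₀, hη₀, hgap⟩ := (hZ.image Φ).exists_pos_forall_eq_of_abs_sub_le v
  have hgap' : ∀ x ∈ D, Φ x ≤ L → |Φ x - v| ≤ η₀ → fderiv ℝ Φ x = 0 → Φ x = v :=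
    fun x hxD hxL hxv hcrit => hgap _ ⟨x, ⟨hxD, hxL, hcrit⟩, rfl⟩ hxv
  set Zv := {x ∈ D | Φ x = v ∧ fderiv ℝ Φ x = 0}
  have hZv : Zv.Finite := hZc.subset fun x hx => ⟨hx.1, hx.2.1.trans_le hwc, hx.2.2⟩
  obtain ⟨η, ⟨hη, hηη₀⟩, hcross⟩ :=
    exists_catLS_sublevel_le_add_ncard hΦ hD hfront (hwc.trans hc) hη₀ hZv hgap'
  have htop : catLS {y ∈ D | Φ y ≤ c} D ≤ catLS {y ∈ D | Φ y ≤ v - η} D + Zv.ncard := by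
    rcases le_or_gt c (v + η) with h | h
    · exact hcross c ⟨hwc, h⟩ hc
    · refine (catLS_sublevel_le_of_forall_fderiv_ne hΦ hD hfront (a := v + η / 2) (by linarith)
        h.le hc fun x hxD hxa hxc hcrit => ?_).trans (hcross _ ⟨by linarith, le_rfl⟩ (by linarith))
      linarith [hwmax x ⟨hxD, hxc, hcrit⟩]
  have hcard : Zc.ncard = {x ∈ D | Φ x ≤ v - η ∧ fderiv ℝ Φ x = 0}.ncard + Zv.ncard :=
    ncard_sep_le_eq_add hwc hη hZc fun x hxD hxc hcrit => by
      have hxv := hwmax x ⟨hxD, hxc, hcrit⟩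
      by_cases h : Φ x ≤ v - η
      · exact Or.inr h
      · exact Or.inl (hgap' x hxD (hxc.trans hc) (abs_le.2 ⟨by linarith, by linarith⟩) hcrit)
  have hZv_pos : 0 < Zv.ncard := (ncard_pos hZv).2 ⟨w, hwD, rfl, hwcrit⟩
  calc catLS {y ∈ D | Φ y ≤ c} D ≤ catLS {y ∈ D | Φ y ≤ v - η} D + Zv.ncard := htop
    _ ≤ {x ∈ D | Φ x ≤ v - η ∧ fderiv ℝ Φ x = 0}.ncard + Zv.ncard :=
      Nat.add_le_add_right (ih _ (by omega) (by linarith) rfl) _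
    _ = n := by rw [← hn, hcard]

theorem exists_critical_points_catLS_le (hΦ : ContDiff ℝ 1 Φ) (hD : IsCompact D)
    (hfront : ∀ x ∈ frontier D, L < Φ x) {A : Set (ι → ℝ)} (hA : A ⊆ {y ∈ D | Φ y ≤ L}) :
    ∃ S ⊆ D, S.Finite ∧ catLS A D ≤ S.ncard ∧ ∀ x ∈ S, fderiv ℝ Φ x = 0 := by
  set Z := {x ∈ D | Φ x ≤ L ∧ fderiv ℝ Φ x = 0}
  by_cases hZ : Z.Finite
  · refine ⟨Z, fun x hx => hx.1, hZ, ?_, fun x hx => hx.2.2⟩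
    exact (catLS_mono_left hA (catSet_nonempty_of_subset_sublevel hD.isClosed hfront
      (hD.sublevel hΦ.continuous L) subset_rfl)).trans
      (catLS_sublevel_le_ncard_critical hΦ hD hfront hZ le_rfl)
  · obtain ⟨S, hSZ, hS, hcard⟩ := Set.Infinite.exists_subset_ncard_eq hZ (catLS A D)
    exact ⟨S, fun x hx => (hSZ hx).1, hS, hcard.ge, fun x hx => (hSZ hx).2.2⟩

end LusternikSchnirelmann

theorem multiplicity_via_category_general (N : ℕ)
    (Γ : (Fin N → ℝ) → ℝ) (hΓC : ContDiff ℝ 1 Γ)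
    (X : Set (Fin N → ℝ)) (hX : IsCompact X)
    (δ : ℝ)
    (a b : ℝ) (ha : ∀ x ∈ X, Γ x = a)
    (hb : b = sInf (Γ '' frontier (Metric.cthickening δ X)))
    (hab : a < b)
    (C₁ : ℝ) (hC₁ : 0 < C₁)
    (Φ : ℝ → (Fin N → ℝ) → ℝ) (hΦC : ∀ ε : ℝ, 0 < ε → ContDiff ℝ 1 (Φ ε))
    (happrox : ∀ η : ℝ, 0 < η → ∃ ε₁ : ℝ, 0 < ε₁ ∧ ∀ ε : ℝ, 0 < ε → ε < ε₁ →
        ∀ ξ : Fin N → ℝ, ε • ξ ∈ Metric.cthickening δ X →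
          |Φ ε ξ - C₁ * Γ (ε • ξ)| ≤ η) :
    ∃ ε₀ : ℝ, 0 < ε₀ ∧ ∀ ε : ℝ, 0 < ε → ε < ε₀ →
      IsCompact {ξ : Fin N → ℝ | ε • ξ ∈ Metric.cthickening δ X ∧
          Φ ε ξ ≤ C₁ * (a + b) / 2} ∧
      {ξ : Fin N → ℝ | ε • ξ ∈ X} ⊆
        {ξ | ε • ξ ∈ Metric.cthickening δ X ∧ Φ ε ξ ≤ C₁ * (a + b) / 2} ∧
      {ξ : Fin N → ℝ | ε • ξ ∈ Metric.cthickening δ X ∧ Φ ε ξ ≤ C₁ * (a + b) / 2} ⊆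
        {ξ | ε • ξ ∈ Metric.cthickening δ X} ∧
      {ξ : Fin N → ℝ | ε • ξ ∈ Metric.cthickening δ X ∧ Φ ε ξ ≤ C₁ * (a + b) / 2} ∩
        frontier {ξ : Fin N → ℝ | ε • ξ ∈ Metric.cthickening δ X} = ∅ ∧
      ∃ S : Set (Fin N → ℝ), S ⊆ {ξ | ε • ξ ∈ Metric.cthickening δ X} ∧ S.Finite ∧
        catLS X (Metric.cthickening δ X) ≤ S.ncard ∧
        ∀ ξ ∈ S, fderiv ℝ (Φ ε) ξ = 0 := by
  set K := Metric.cthickening δ X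
  have hK : IsCompact K := hX.cthickening
  have hΓfront : ∀ y ∈ frontier K, b ≤ Γ y := fun y hy => hb ▸ csInf_le
    ((hK.of_isClosed_subset isClosed_frontier hK.isClosed.frontier_subset).bddBelow_image
      hΓC.continuous.continuousOn) (mem_image_of_mem Γ hy)
  obtain ⟨ε₁, hε₁, happ⟩ := happrox (C₁ * (b - a) / 4) (by nlinarith)
  refine ⟨ε₁, hε₁, fun ε hε hεε₁ => ?_⟩
  have happε := happ ε hε hεε₁
  set e : (Fin N → ℝ) ≃ₜ (Fin N → ℝ) := Homeomorph.smulOfNeZero ε hε.ne'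
  have hD : IsCompact {ξ | ε • ξ ∈ K} := e.isCompact_preimage.2 hK
  have hfront : ∀ ξ ∈ frontier {ξ | ε • ξ ∈ K}, C₁ * (a + b) / 2 < Φ ε ξ := by
    intro ξ hξ
    rw [show {ξ | ε • ξ ∈ K} = e ⁻¹' K from rfl, ← e.preimage_frontier] at hξ
    have h := abs_le.1 (happε ξ (hK.isClosed.frontier_subset hξ))
    have hbΓ : b ≤ Γ (ε • ξ) := hΓfront _ hξ
    nlinarith [mul_le_mul_of_nonneg_left hbΓ hC₁.le]
  have hXY : {ξ | ε • ξ ∈ X} ⊆ {ξ | ε • ξ ∈ K ∧ Φ ε ξ ≤ C₁ * (a + b) / 2} := by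
    intro ξ hξ
    have hξK : ε • ξ ∈ K := Metric.self_subset_cthickening X hξ
    have h := abs_le.1 (happε ξ hξK)
    rw [ha _ hξ] at h
    exact ⟨hξK, by nlinarith⟩
  obtain ⟨S, hSD, hS, hcat, hcrit⟩ := exists_critical_points_catLS_le (hΦC ε hε) hD hfront hXY
  refine ⟨hD.sublevel (hΦC ε hε).continuous _, hXY, fun ξ hξ => hξ.1,
    eq_empty_of_forall_notMem fun ξ ⟨hξ, hfr⟩ => (hfront ξ hfr).not_ge hξ.2, S, hSD, hS, ?_, hcrit⟩
  exact (catLS_preimage_homeomorph e X K).symm.le.trans hcat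

/-- If `Γ` attains a strict local minimum value `a` on the compact
set `X` (with `b = inf_{∂X_δ} Γ > a`), and `Φ_ε` are `C¹` with
`Φ_ε(ξ) = C₁Γ(εξ) + o_ε(1)` uniformly on `X_δ^ε`, then for small `ε` the sublevel set
`Y^ε` is compact, `X^ε ⊆ Y^ε ⊆ X_δ^ε`, `Y^ε` avoids `∂X_δ^ε`, and `Φ_ε` has at least
`cat(X, X_δ)` critical points in `X_δ^ε`. -/
theorem multiplicity_via_category (N : ℕ) (hN : 3 ≤ N)
    (Γ : (Fin N → ℝ) → ℝ) (hΓC : ContDiff ℝ 1 Γ)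
    (X : Set (Fin N → ℝ)) (hX : IsCompact X) (hXne : X.Nonempty)
    (δ : ℝ) (hδ : 0 < δ)
    (a b : ℝ) (ha : ∀ x ∈ X, Γ x = a)
    (hb : b = sInf (Γ '' frontier (Metric.cthickening δ X)))
    (hab : a < b)
    (C₁ : ℝ) (hC₁ : 0 < C₁)
    (Φ : ℝ → (Fin N → ℝ) → ℝ) (hΦC : ∀ ε : ℝ, 0 < ε → ContDiff ℝ 1 (Φ ε))
    (happrox : ∀ η : ℝ, 0 < η → ∃ ε₁ : ℝ, 0 < ε₁ ∧ ∀ ε : ℝ, 0 < ε → ε < ε₁ →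
        ∀ ξ : Fin N → ℝ, ε • ξ ∈ Metric.cthickening δ X →
          |Φ ε ξ - C₁ * Γ (ε • ξ)| ≤ η) :
    ∃ ε₀ : ℝ, 0 < ε₀ ∧ ∀ ε : ℝ, 0 < ε → ε < ε₀ →
      IsCompact {ξ : Fin N → ℝ | ε • ξ ∈ Metric.cthickening δ X ∧
          Φ ε ξ ≤ C₁ * (a + b) / 2} ∧
      {ξ : Fin N → ℝ | ε • ξ ∈ X} ⊆
        {ξ | ε • ξ ∈ Metric.cthickening δ X ∧ Φ ε ξ ≤ C₁ * (a + b) / 2} ∧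
      {ξ : Fin N → ℝ | ε • ξ ∈ Metric.cthickening δ X ∧ Φ ε ξ ≤ C₁ * (a + b) / 2} ⊆
        {ξ | ε • ξ ∈ Metric.cthickening δ X} ∧
      {ξ : Fin N → ℝ | ε • ξ ∈ Metric.cthickening δ X ∧ Φ ε ξ ≤ C₁ * (a + b) / 2} ∩
        frontier {ξ : Fin N → ℝ | ε • ξ ∈ Metric.cthickening δ X} = ∅ ∧
      ∃ S : Set (Fin N → ℝ), S ⊆ {ξ | ε • ξ ∈ Metric.cthickening δ X} ∧ S.Finite ∧
        catLS X (Metric.cthickening δ X) ≤ S.ncard ∧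
        ∀ ξ ∈ S, fderiv ℝ (Φ ε) ξ = 0 :=
  multiplicity_via_category_general N Γ hΓC X hX δ a b ha hb hab C₁ hC₁ Φ hΦC happrox
end
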